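/- arXiv:1806.09829 — 4 statements merged into one kernel-verified Lean document; each statement's English description precedes it below -/
import Mathlib

section
/- Let q₁,q₂,q₃ ∈ ℝ[t] be polynomials such that every common divisor of q₁,q₂,q₃ is a unit, and let n = max(deg q₁, deg q₂, deg q₃). Let α,β,γ,δ ∈ ℝ with αδ−βγ ≠ 0, and let ψ = (αt+β)/(γt+δ) ∈ ℝ(t). Let Q be a real 3×3 matrix, and let A,B ∈ ℝ[t] be coprime polynomials with B ≠ 0 such that for each i ∈ {1,2,3}, Qᵢ₁·q₁(t) + Qᵢ₂·q₂(t) + Qᵢ₃·q₃(t) = (A(t)/B(t))·qᵢ(ψ) holds in ℝ(t). Then (γt+δ)ⁿ divides A(t) in ℝ[t]. -/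
open Polynomial

/-- Lemma 4 (At): `(γt+δ)^n` divides `A(t)`. -/
theorem stmt_1 (q : Fin 3 → ℝ[X])
    (hgcd : ∀ d : ℝ[X], (∀ i, d ∣ q i) → IsUnit d)
    (n : ℕ) (hn : n = max (max (q 0).natDegree (q 1).natDegree) (q 2).natDegree)
    (α β γ δ : ℝ) (hm : α * δ - β * γ ≠ 0)
    (ψ : RatFunc ℝ)
    (hψ : ψ = algebraMap ℝ[X] (RatFunc ℝ) (C α * X + C β) /
              algebraMap ℝ[X] (RatFunc ℝ) (C γ * X + C δ))
    (Q : Matrix (Fin 3) (Fin 3) ℝ)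
    (A B : ℝ[X]) (hAB : IsCoprime A B) (hB : B ≠ 0)
    (heq : ∀ i, algebraMap ℝ[X] (RatFunc ℝ) (∑ j, C (Q i j) * q j) =
        (algebraMap ℝ[X] (RatFunc ℝ) A / algebraMap ℝ[X] (RatFunc ℝ) B) *
          Polynomial.aeval ψ (q i)) :
    (C γ * X + C δ) ^ n ∣ A := by
  rcases eq_or_ne γ 0 with hγ | hγ
  · -- degenerate case : γ = 0, the factor is a unit
    have hδ : δ ≠ 0 := by intro h; apply hm; rw [hγ, h]; ring
    have hu : IsUnit (C γ * X + C δ) := by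
      rw [hγ, map_zero, zero_mul, zero_add]
      exact isUnit_C.mpr hδ.isUnit
    exact (hu.pow n).dvd
  · set M := algebraMap ℝ[X] (RatFunc ℝ) with hM
    set Np : ℝ[X] := C α * X + C β with hNp
    set Pp : ℝ[X] := C γ * X + C δ with hPp
    have hPpdeg : Pp.natDegree = 1 := natDegree_linear hγ
    have hPp0 : Pp ≠ 0 := by
      intro h; rw [h, natDegree_zero] at hPpdeg; exact one_ne_zero hPpdeg.symm
    have hMP : M Pp ≠ 0 :=
      (map_ne_zero_iff M (RatFunc.algebraMap_injective ℝ)).mpr hPp0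
    have hMB : M B ≠ 0 :=
      (map_ne_zero_iff M (RatFunc.algebraMap_injective ℝ)).mpr hB
    have hdeg : ∀ i, (q i).natDegree ≤ n := by
      intro i; fin_cases i <;> rw [hn] <;> simp [le_max_iff]
    set Nt : Fin 3 → ℝ[X] :=
      fun i => ∑ k ∈ Finset.range (n + 1), C ((q i).coeff k) * Np ^ k * Pp ^ (n - k)
      with hNt
    -- key identity : M Pp ^ n * q i (ψ) = M (Nt i)
    have key : ∀ i, M Pp ^ n * Polynomial.aeval ψ (q i) = M (Nt i) := by
      intro i
      rw [aeval_eq_sum_range' (Nat.lt_succ_of_le (hdeg i)) ψ, Finset.mul_sum, hNt,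
        map_sum]
      refine Finset.sum_congr rfl fun k hk => ?_
      have hkn : k ≤ n := Nat.lt_succ_iff.mp (Finset.mem_range.mp hk)
      rw [hψ, Algebra.smul_def, map_mul, map_mul, map_pow, map_pow,
        IsScalarTower.algebraMap_apply ℝ ℝ[X] (RatFunc ℝ), Polynomial.algebraMap_eq,
        div_pow]
      have hsplit : M Pp ^ n = M Pp ^ (n - k) * M Pp ^ k := by
        rw [← pow_add, Nat.sub_add_cancel hkn]
      rw [hsplit]
      field_simp
      simp only [hM, RatFunc.algebraMap_C]
      ring
    -- polynomial identity obtained by clearing denominators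
    have hpoly : ∀ i, Pp ^ n * (∑ j, C (Q i j) * q j) * B = A * Nt i := by
      intro i
      apply RatFunc.algebraMap_injective ℝ
      have h1 := heq i
      rw [div_mul_eq_mul_div, eq_div_iff hMB] at h1
      simp only [map_mul, map_pow]
      calc M Pp ^ n * M (∑ j, C (Q i j) * q j) * M B
          = M Pp ^ n * (M (∑ j, C (Q i j) * q j) * M B) := by ring
        _ = M Pp ^ n * (M A * Polynomial.aeval ψ (q i)) := by rw [h1]
        _ = M A * (M Pp ^ n * Polynomial.aeval ψ (q i)) := by ring
        _ = M A * M (Nt i) := by rw [key i]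
    -- there is an index of maximal degree with nonzero polynomial
    have hne : ∃ j, q j ≠ 0 := by
      by_contra h
      push_neg at h
      exact Polynomial.not_isUnit_X (hgcd X fun i => (h i) ▸ dvd_zero X)
    have hex : ∃ i, (q i).natDegree = n := by
      rcases max_choice (max (q 0).natDegree (q 1).natDegree) (q 2).natDegree with h | h
      · rcases max_choice (q 0).natDegree (q 1).natDegree with h' | h'
        · exact ⟨0, by rw [hn, h, h']⟩
        · exact ⟨1, by rw [hn, h, h']⟩
      · exact ⟨2, by rw [hn, h]⟩
    have hi0 : ∃ i, q i ≠ 0 ∧ (q i).natDegree = n := by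
      obtain ⟨i₀, hi₀⟩ := hex
      by_cases hq0 : q i₀ = 0
      · obtain ⟨j, hj⟩ := hne
        refine ⟨j, hj, le_antisymm (hdeg j) ?_⟩
        rw [← hi₀, hq0, natDegree_zero]
        exact Nat.zero_le _
      · exact ⟨i₀, hq0, hi₀⟩
    obtain ⟨i₀, hq0, hi₀⟩ := hi0
    -- Pp is prime
    have hprime : Prime Pp :=
      (Polynomial.irreducible_of_degree_eq_one (degree_linear hγ)).prime
    -- Pp does not divide Nt i₀
    have hPe : Pp.eval (-δ / γ) = 0 := by
      simp only [hPp, eval_add, eval_mul, eval_C, eval_X]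
      field_simp
      ring
    have hNe : Np.eval (-δ / γ) ≠ 0 := by
      simp only [hNp, eval_add, eval_mul, eval_C, eval_X]
      intro h
      apply hm
      field_simp at h
      linarith
    have hNd : ¬ Pp ∣ Nt i₀ := by
      rintro ⟨c, hc⟩
      have hev : (Nt i₀).eval (-δ / γ) = 0 := by
        rw [hc, eval_mul, hPe, zero_mul]
      have hev2 : (Nt i₀).eval (-δ / γ) = (q i₀).coeff n * Np.eval (-δ / γ) ^ n := by
        rw [hNt]
        simp only [eval_finset_sum, eval_mul, eval_pow, eval_C]
        rw [Finset.sum_eq_single n]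
        · rw [hPe, Nat.sub_self, pow_zero, mul_one]
        · intro k hk hkn
          rw [hPe, zero_pow (Nat.sub_ne_zero_of_lt
            (lt_of_le_of_ne (Nat.lt_succ_iff.mp (Finset.mem_range.mp hk)) hkn)), mul_zero]
        · intro h
          exact absurd (Finset.self_mem_range_succ n) h
      have hlc : (q i₀).coeff n ≠ 0 := by
        rw [← hi₀, coeff_natDegree]
        exact leadingCoeff_ne_zero.mpr hq0
      rw [hev2] at hev
      exact (mul_ne_zero hlc (pow_ne_zero n hNe)) hev
    -- conclude
    have hdvd : Pp ^ n ∣ A * Nt i₀ :=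
      ⟨(∑ j, C (Q i₀ j) * q j) * B, by linear_combination -hpoly i₀⟩
    exact hprime.pow_dvd_of_dvd_mul_right n hNd hdvd
end

section
/- Let q₁,q₂,q₃ ∈ ℝ[t] be polynomials such that every common divisor of q₁,q₂,q₃ is a unit, and let n = max(deg q₁, deg q₂, deg q₃). Let α,β,γ,δ ∈ ℝ with αδ−βγ ≠ 0, and let ψ = (αt+β)/(γt+δ) ∈ ℝ(t). Let Q be a real orthogonal 3×3 matrix (QᵀQ = I), and let A,B ∈ ℝ[t] be coprime polynomials with B ≠ 0 such that for each i ∈ {1,2,3}, Qᵢ₁·q₁(t) + Qᵢ₂·q₂(t) + Qᵢ₃·q₃(t) = (A(t)/B(t))·qᵢ(ψ) holds in ℝ(t). Then there exists a constant k ∈ ℝ such that A(t)/B(t) = k·(γt+δ)ⁿ in ℝ(t). -/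
open Polynomial Matrix

lemma div_pow_mul_aux {K : Type*} [Field K] (F G : K) (hG : G ≠ 0) {j n : ℕ} (h : j ≤ n) :
    (F / G) ^ j * G ^ n = F ^ j * G ^ (n - j) := by
  rw [div_pow, div_mul_eq_mul_div, eq_comm, eq_div_iff (pow_ne_zero _ hG), mul_assoc,
    ← pow_add, Nat.sub_add_cancel h]

lemma transform_eq (f g : ℝ[X]) (hg : g ≠ 0) (n : ℕ) (p : ℝ[X]) (hp : p.natDegree ≤ n) :
    algebraMap ℝ[X] (RatFunc ℝ)
        (∑ j ∈ Finset.range (n+1), C (p.coeff j) * f ^ j * g ^ (n - j)) =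
      Polynomial.aeval (algebraMap ℝ[X] (RatFunc ℝ) f / algebraMap ℝ[X] (RatFunc ℝ) g) p *
        (algebraMap ℝ[X] (RatFunc ℝ) g) ^ n := by
  have hG : algebraMap ℝ[X] (RatFunc ℝ) g ≠ 0 := RatFunc.algebraMap_ne_zero hg
  rw [Polynomial.aeval_eq_sum_range' (Nat.lt_succ_of_le hp), Finset.sum_mul, _root_.map_sum]
  refine Finset.sum_congr rfl fun j hj => ?_
  have hj' : j ≤ n := Nat.lt_succ_iff.mp (Finset.mem_range.mp hj)
  rw [smul_mul_assoc, div_pow_mul_aux _ _ hG hj', _root_.map_mul, _root_.map_mul, _root_.map_pow, _root_.map_pow]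
  rw [Algebra.smul_def, IsScalarTower.algebraMap_apply ℝ ℝ[X] (RatFunc ℝ)]
  rw [Polynomial.algebraMap_eq]; ring

lemma common_prime_dvd (q : Fin 3 → ℝ[X]) (hgcd : ∀ d : ℝ[X], (∀ i, d ∣ q i) → IsUnit d)
    (n : ℕ) (hq : ∀ i, (q i).natDegree ≤ n) (f g : ℝ[X]) (π : ℝ[X]) (hπ : Prime π)
    (hdvd : ∀ i, π ∣ ∑ j ∈ Finset.range (n+1), C ((q i).coeff j) * f ^ j * g ^ (n - j)) :
    π ∣ g := by
  by_contra hng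
  have hdegπ : 0 < (π.map (algebraMap ℝ ℂ)).degree := by
    rw [Polynomial.degree_map]
    exact Polynomial.degree_pos_of_irreducible hπ.irreducible
  obtain ⟨z, hz⟩ := Complex.exists_root hdegπ
  have hzπ : Polynomial.aeval z π = 0 := by
    rwa [Polynomial.aeval_def, ← Polynomial.eval_map]
  -- g(z) ≠ 0 via coprimality
  have hcop : IsCoprime π g := hπ.coprime_iff_not_dvd.mpr hng
  obtain ⟨u, v, huv⟩ := hcop
  have hGz : Polynomial.aeval z g ≠ 0 := by
    intro h0
    have := congrArg (Polynomial.aeval z) huv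
    simp [hzπ, h0] at this
  set Fz := Polynomial.aeval z f with hFz
  set Gz := Polynomial.aeval z g with hGz'
  set w := Fz / Gz with hw
  -- each q i vanishes at w
  have hroot : ∀ i, Polynomial.aeval w (q i) = 0 := by
    intro i
    obtain ⟨s, hs⟩ := hdvd i
    have h1 : Polynomial.aeval z (∑ j ∈ Finset.range (n+1),
        C ((q i).coeff j) * f ^ j * g ^ (n - j)) = 0 := by
      rw [hs, _root_.map_mul, hzπ, zero_mul]
    have h2 : Polynomial.aeval w (q i) * Gz ^ n = 0 := by
      rw [Polynomial.aeval_eq_sum_range' (Nat.lt_succ_of_le (hq i)) w, Finset.sum_mul]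
      rw [_root_.map_sum] at h1
      rw [← h1]
      refine Finset.sum_congr rfl fun j hj => ?_
      have hj' : j ≤ n := Nat.lt_succ_iff.mp (Finset.mem_range.mp hj)
      rw [smul_mul_assoc, hw, div_pow_mul_aux _ _ hGz hj', _root_.map_mul, _root_.map_mul, _root_.map_pow, _root_.map_pow,
        Polynomial.aeval_C, Algebra.smul_def]
      rw [← hFz, ← hGz']; ring
    exact (mul_eq_zero.mp h2).resolve_right (pow_ne_zero _ hGz)
  -- Bezout combination of q 0, q 1, q 2 equals a unit
  set d01 := EuclideanDomain.gcd (q 0) (q 1) with hd01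
  set d := EuclideanDomain.gcd d01 (q 2) with hd
  have hdunit : IsUnit d := by
    refine hgcd d fun i => ?_
    fin_cases i
    · exact dvd_trans (EuclideanDomain.gcd_dvd_left _ _) (EuclideanDomain.gcd_dvd_left _ _)
    · exact dvd_trans (EuclideanDomain.gcd_dvd_left _ _) (EuclideanDomain.gcd_dvd_right _ _)
    · exact EuclideanDomain.gcd_dvd_right _ _
  have hbz1 : d = d01 * EuclideanDomain.gcdA d01 (q 2) + q 2 * EuclideanDomain.gcdB d01 (q 2) :=
    EuclideanDomain.gcd_eq_gcd_ab _ _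
  have hbz2 : d01 = q 0 * EuclideanDomain.gcdA (q 0) (q 1)
      + q 1 * EuclideanDomain.gcdB (q 0) (q 1) := EuclideanDomain.gcd_eq_gcd_ab _ _
  have hdz : Polynomial.aeval w d = 0 := by
    rw [hbz1, hbz2]
    simp [hroot 0, hroot 1, hroot 2]
  -- but a unit polynomial cannot vanish
  obtain ⟨r, hr, hrd⟩ := Polynomial.isUnit_iff.mp hdunit
  rw [← hrd, Polynomial.aeval_C] at hdz
  exact hr.ne_zero (by simpa using hdz)

lemma unit_of_no_prime (A : ℝ[X]) (hA : A ≠ 0) (h : ∀ π : ℝ[X], Prime π → ¬ π ∣ A) :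
    IsUnit A := by
  by_contra hu
  obtain ⟨i, hi, hid⟩ := WfDvdMonoid.exists_irreducible_factor hu hA
  exact h i hi.prime hid

lemma eq_C_mul_pow (g : ℝ[X]) (hg : Prime g) (A : ℝ[X]) (hA : A ≠ 0)
    (h : ∀ π : ℝ[X], Prime π → π ∣ A → π ∣ g) : ∃ (c : ℝ) (m : ℕ), A = C c * g ^ m := by
  have hgd : 0 < g.natDegree :=
    Polynomial.natDegree_pos_iff_degree_pos.mpr (Polynomial.degree_pos_of_irreducible hg.irreducible)
  obtain ⟨d, hd⟩ : ∃ d, A.natDegree = d := ⟨_, rfl⟩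
  induction d using Nat.strong_induction_on generalizing A with
  | _ d ih =>
    by_cases hu : IsUnit A
    · obtain ⟨r, _, rfl⟩ := Polynomial.isUnit_iff.mp hu
      exact ⟨r, 0, by simp⟩
    · obtain ⟨π, hπ, hπA⟩ := WfDvdMonoid.exists_irreducible_factor hu hA
      have hgA : g ∣ A := ((hπ.prime.associated_of_dvd hg (h π hπ.prime hπA)).symm.dvd).trans hπA
      obtain ⟨A₁, rfl⟩ := hgA
      have hA₁ : A₁ ≠ 0 := right_ne_zero_of_mul hA
      have hdeg : A₁.natDegree < d := by
        have := Polynomial.natDegree_mul hg.ne_zero hA₁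
        omega
      obtain ⟨c, m, hcm⟩ := ih _ hdeg A₁ hA₁
        (fun π hπ' hd' => h π hπ' (Dvd.dvd.mul_left hd' g)) rfl
      exact ⟨c, m+1, by rw [hcm]; ring⟩

/-- Proposition 6 (prop-a(t)): for an orthogonal `Q`, the rational function
`a(t) = A(t)/B(t)` equals `k·(γt+δ)^n` for some constant `k`. -/
theorem stmt_3 (q : Fin 3 → ℝ[X])
    (hgcd : ∀ d : ℝ[X], (∀ i, d ∣ q i) → IsUnit d)
    (n : ℕ) (hn : n = max (max (q 0).natDegree (q 1).natDegree) (q 2).natDegree)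
    (α β γ δ : ℝ) (hm : α * δ - β * γ ≠ 0)
    (ψ : RatFunc ℝ)
    (hψ : ψ = algebraMap ℝ[X] (RatFunc ℝ) (C α * X + C β) /
              algebraMap ℝ[X] (RatFunc ℝ) (C γ * X + C δ))
    (Q : Matrix (Fin 3) (Fin 3) ℝ) (hQ : Qᵀ * Q = 1)
    (A B : ℝ[X]) (hAB : IsCoprime A B) (hB : B ≠ 0)
    (heq : ∀ i, algebraMap ℝ[X] (RatFunc ℝ) (∑ j, C (Q i j) * q j) =
        (algebraMap ℝ[X] (RatFunc ℝ) A / algebraMap ℝ[X] (RatFunc ℝ) B) *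
          Polynomial.aeval ψ (q i)) :
    ∃ k : ℝ, algebraMap ℝ[X] (RatFunc ℝ) A / algebraMap ℝ[X] (RatFunc ℝ) B =
      algebraMap ℝ[X] (RatFunc ℝ) (C k * (C γ * X + C δ) ^ n) := by
  set f : ℝ[X] := C α * X + C β with hfdef
  set g : ℝ[X] := C γ * X + C δ with hgdef
  have hγδ : ¬(γ = 0 ∧ δ = 0) := by rintro ⟨rfl, rfl⟩; simp at hm
  have hg0 : g ≠ 0 := by
    intro h
    refine hγδ ⟨?_, ?_⟩
    · have := congrArg (fun p => Polynomial.coeff p 1) h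
      simpa [hgdef] using this
    · have := congrArg (fun p => Polynomial.coeff p 0) h
      simpa [hgdef] using this
  have hG : algebraMap ℝ[X] (RatFunc ℝ) g ≠ 0 := RatFunc.algebraMap_ne_zero hg0
  have hBG : algebraMap ℝ[X] (RatFunc ℝ) B ≠ 0 := RatFunc.algebraMap_ne_zero hB
  have hqdeg : ∀ i, (q i).natDegree ≤ n := by
    intro i
    fin_cases i
    · exact hn ▸ le_trans (le_max_left _ _) (le_max_left _ _)
    · exact hn ▸ le_trans (le_max_right _ _) (le_max_left _ _)
    · exact hn ▸ le_max_right _ _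
  set r : Fin 3 → ℝ[X] :=
    fun i => ∑ j ∈ Finset.range (n+1), C ((q i).coeff j) * f ^ j * g ^ (n - j) with hrdef
  have hr : ∀ i, algebraMap ℝ[X] (RatFunc ℝ) (r i) =
      Polynomial.aeval ψ (q i) * (algebraMap ℝ[X] (RatFunc ℝ) g) ^ n := by
    intro i
    rw [hψ]
    exact transform_eq f g hg0 n (q i) (hqdeg i)
  set p : Fin 3 → ℝ[X] := fun i => ∑ j, C (Q i j) * q j with hpdef
  have hp : ∀ i, algebraMap ℝ[X] (RatFunc ℝ) (p i) =
      (algebraMap ℝ[X] (RatFunc ℝ) A / algebraMap ℝ[X] (RatFunc ℝ) B) *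
        Polynomial.aeval ψ (q i) := by
    intro i; simpa [hpdef] using heq i
  have hE : ∀ i, B * (g ^ n * p i) = A * r i := by
    intro i
    apply RatFunc.algebraMap_injective ℝ
    rw [_root_.map_mul, _root_.map_mul, _root_.map_mul, _root_.map_pow, hp i, hr i]
    field_simp
  have hBr : ∀ i, B ∣ r i := by
    intro i
    exact hAB.symm.dvd_of_dvd_mul_left ⟨g ^ n * p i, (hE i).symm⟩
  have hAd : ∀ i, A ∣ g ^ n * p i := by
    intro i
    exact hAB.dvd_of_dvd_mul_left ⟨r i, by rw [← hE i]⟩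
  have hentry : ∀ i k, (∑ j, Q j i * Q j k) = if i = k then (1:ℝ) else 0 := by
    intro i k
    have := congrFun (congrFun hQ i) k
    simpa [Matrix.mul_apply, Matrix.transpose_apply, Matrix.one_apply] using this
  have hcomb : ∀ i, (∑ j, C (Q j i) * p j) = q i := by
    intro i
    have h1 : (∑ j, C (Q j i) * p j) = ∑ k, C (∑ j, Q j i * Q j k) * q k := by
      simp only [hpdef, Finset.mul_sum, _root_.map_sum, Finset.sum_mul]
      rw [Finset.sum_comm]
      refine Finset.sum_congr rfl fun k _ => ?_
      refine Finset.sum_congr rfl fun j _ => ?_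
      rw [← mul_assoc, ← C_mul]
    rw [h1]
    simp [hentry, apply_ite C, ite_mul, Finset.sum_ite_eq]
  have hgcdp : ∀ d : ℝ[X], (∀ i, d ∣ p i) → IsUnit d := by
    intro d hd
    refine hgcd d fun i => ?_
    rw [← hcomb i]
    exact Finset.dvd_sum fun j _ => (hd j).mul_left _
  have hA0 : A ≠ 0 := by
    intro h0
    have hp0 : ∀ i, p i = 0 := by
      intro i
      have h1 := hE i
      rw [h0, zero_mul, mul_eq_zero] at h1
      rcases h1 with h | h
      · exact absurd h hB
      rcases mul_eq_zero.mp h with h | h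
      · exact absurd h (pow_ne_zero _ hg0)
      · exact h
    exact Polynomial.not_isUnit_X
      (hgcdp X (fun i => by rw [hp0 i]; exact dvd_zero _))
  have hex : ∃ i, (q i).natDegree = n := by
    rcases max_choice (max (q 0).natDegree (q 1).natDegree) (q 2).natDegree with h | h
    · rcases max_choice (q 0).natDegree (q 1).natDegree with h' | h'
      · exact ⟨0, by rw [hn, h, h']⟩
      · exact ⟨1, by rw [hn, h, h']⟩
    · exact ⟨2, by rw [hn, h]⟩
  have hi0 : ∃ i, (q i).coeff n ≠ 0 := by
    obtain ⟨i, hi⟩ := hex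
    by_cases hqi : q i = 0
    · have hn0 : n = 0 := by rw [← hi, hqi, Polynomial.natDegree_zero]
      have hj : ∃ j, q j ≠ 0 := by
        by_contra hz; push_neg at hz
        exact Polynomial.not_isUnit_X
          (hgcd X (fun i => by rw [hz i]; exact dvd_zero _))
      obtain ⟨j, hj⟩ := hj
      refine ⟨j, fun h0 => hj ?_⟩
      rw [hn0] at h0
      have := Polynomial.eq_C_of_natDegree_le_zero (hn0 ▸ hqdeg j)
      rw [this, h0, _root_.map_zero]
    · exact ⟨i, by rw [← hi]; exact Polynomial.leadingCoeff_ne_zero.mpr hqi⟩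
  obtain ⟨i₀, hi₀⟩ := hi0
  by_cases hγ : γ = 0
  · -- g is a unit
    subst hγ
    have hδ : δ ≠ 0 := by intro h; apply hm; rw [h]; ring
    have hgu : IsUnit g := by
      rw [hgdef, _root_.map_zero, zero_mul, zero_add]
      exact Polynomial.isUnit_C.mpr (isUnit_iff_ne_zero.mpr hδ)
    have hBu : IsUnit B := by
      refine unit_of_no_prime B hB fun π hπ hπB => ?_
      have hπg : π ∣ g := common_prime_dvd q hgcd n hqdeg f g π hπ
        (fun i => (hπB.trans (hBr i)))
      exact hπ.not_unit (isUnit_of_dvd_unit hπg hgu)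
    have hAu : IsUnit A := by
      refine unit_of_no_prime A hA0 fun π hπ hπA => ?_
      have hdvd : ∀ i, π ∣ p i := fun i =>
        ((hgu.pow n).dvd_mul_left).mp (hπA.trans (hAd i))
      exact hπ.not_unit (hgcdp π hdvd)
    obtain ⟨a₀, ha₀u, ha₀⟩ := Polynomial.isUnit_iff.mp hAu
    obtain ⟨b₀, hb₀u, hb₀⟩ := Polynomial.isUnit_iff.mp hBu
    have hb₀ne : b₀ ≠ 0 := hb₀u.ne_zero
    refine ⟨a₀ / (δ ^ n * b₀), ?_⟩
    rw [div_eq_iff hBG, ← _root_.map_mul]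
    congr 1
    rw [← ha₀, ← hb₀, hgdef, _root_.map_zero, zero_mul, zero_add, ← C_pow, ← C_mul, ← C_mul]
    congr 1
    field_simp
  · -- g is prime
    have hgprime : Prime g := by
      have hdeg : g.degree = 1 := Polynomial.degree_linear hγ
      exact (Polynomial.irreducible_of_degree_eq_one hdeg).prime
    have hi₁ : ∃ i, ¬ g ∣ p i := by
      by_contra hc; push_neg at hc
      exact hgprime.not_unit (hgcdp g hc)
    obtain ⟨i₁, hi₁⟩ := hi₁
    have hgr : ¬ g ∣ r i₀ := by
      intro hdvd
      have hgt : g.eval (-δ/γ) = 0 := by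
        rw [hgdef]
        simp
        field_simp
        ring
      have hrt : (r i₀).eval (-δ/γ) = (q i₀).coeff n * ((β*γ - α*δ)/γ) ^ n := by
        rw [hrdef]
        simp only [Polynomial.eval_finset_sum, Polynomial.eval_mul, Polynomial.eval_pow,
          Polynomial.eval_C]
        rw [Finset.sum_eq_single n]
        · rw [hgt]
          simp only [Nat.sub_self, pow_zero, mul_one]
          congr 2
          rw [hfdef]
          simp
          field_simp
          ring
        · intro j hj hne
          have hj' : j < n := lt_of_le_of_ne (Nat.lt_succ_iff.mp (Finset.mem_range.mp hj)) hne
          rw [hgt, zero_pow (by omega : n - j ≠ 0), mul_zero]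
        · intro h; exact absurd (Finset.self_mem_range_succ n) h
      obtain ⟨s, hs⟩ := hdvd
      rw [hs, Polynomial.eval_mul, hgt, zero_mul] at hrt
      have hbase : ((β*γ - α*δ)/γ) ≠ 0 := by
        refine div_ne_zero (fun h => hm ?_) hγ
        linarith
      exact (mul_ne_zero hi₀ (pow_ne_zero n hbase)) hrt.symm
    have hBu : IsUnit B := by
      refine unit_of_no_prime B hB fun π hπ hπB => ?_
      have hπg : π ∣ g := common_prime_dvd q hgcd n hqdeg f g π hπ
        (fun i => (hπB.trans (hBr i)))
      have hgB : g ∣ B := ((hπ.associated_of_dvd hgprime hπg).symm.dvd).trans hπB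
      exact hgr (hgB.trans (hBr i₀))
    have hAfac : ∀ π : ℝ[X], Prime π → π ∣ A → π ∣ g := by
      intro π hπ hπA
      by_contra hng
      have hdvd : ∀ i, π ∣ p i := by
        intro i
        rcases hπ.dvd_mul.mp (hπA.trans (hAd i)) with h | h
        · exact absurd (hπ.dvd_of_dvd_pow h) hng
        · exact h
      exact hπ.not_unit (hgcdp π hdvd)
    obtain ⟨a₀, m, hAeq⟩ := eq_C_mul_pow g hgprime A hA0 hAfac
    have ha₀ : a₀ ≠ 0 := by
      intro h; apply hA0; rw [hAeq, h]; simp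
    obtain ⟨b₀, hb₀u, hb₀⟩ := Polynomial.isUnit_iff.mp hBu
    have hb₀ne : b₀ ≠ 0 := hb₀u.ne_zero
    have hmn : m ≤ n := by
      by_contra hlt; push_neg at hlt
      have h1 : g ^ n * g ∣ g ^ n * p i₁ := by
        rw [← pow_succ]
        calc g ^ (n+1) ∣ g ^ m := pow_dvd_pow g hlt
          _ ∣ A := ⟨C a₀, by rw [hAeq]; ring⟩
          _ ∣ g ^ n * p i₁ := hAd i₁
      exact hi₁ ((mul_dvd_mul_iff_left (pow_ne_zero n hg0)).mp h1)
    have hnm : n ≤ m := by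
      by_contra hlt; push_neg at hlt
      have h1 : g ^ m * g ∣ g ^ m * (C a₀ * r i₀) := by
        rw [← pow_succ]
        calc g ^ (m+1) ∣ g ^ n := pow_dvd_pow g hlt
          _ ∣ B * (g ^ n * p i₀) := ⟨B * p i₀, by ring⟩
          _ = A * r i₀ := hE i₀
          _ = g ^ m * (C a₀ * r i₀) := by rw [hAeq]; ring
      have h2 : g ∣ C a₀ * r i₀ := (mul_dvd_mul_iff_left (pow_ne_zero m hg0)).mp h1
      rcases hgprime.dvd_mul.mp h2 with h | h
      · exact hgprime.not_unit
          (isUnit_of_dvd_unit h (Polynomial.isUnit_C.mpr (isUnit_iff_ne_zero.mpr ha₀)))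
      · exact hgr h
    refine ⟨a₀ / b₀, ?_⟩
    rw [div_eq_iff hBG, ← _root_.map_mul]
    congr 1
    rw [hAeq, le_antisymm hmn hnm, ← hb₀]
    rw [show (C (a₀ / b₀) * g ^ n * C b₀ : ℝ[X]) = C (a₀ / b₀ * b₀) * g ^ n by
      rw [C_mul]; ring]
    rw [div_mul_cancel₀ _ hb₀ne]
end

section
/- Let α,β,γ,δ,k ∈ ℝ with αδ−βγ ≠ 0, let n ≥ 1 be a natural number, and define ψ(t) = (αt+β)/(γt+δ) for real t with γt+δ ≠ 0. Suppose that for every t ∈ ℝ with γt+δ ≠ 0 one has (k·(γ·ψ(t)+δ)ⁿ)·(k·(γt+δ)ⁿ) = 1. Then γ(α+δ) = 0 and k²·(γβ+δ²)ⁿ = 1. -/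
/-! By `(γψ(t)+δ)(γt+δ) = γ(α+δ)t + (γβ+δ²)`, the hypothesis says `k²(γ(α+δ)t + γβ+δ²)ⁿ = 1`
at every `t` other than the pole `-δ/γ` of `ψ`. If the slope `γ(α+δ)` were nonzero, the affine
function would take two distinct positive values there, contradicting the injectivity of
`x ↦ xⁿ` on `[0, ∞)`. With zero slope, evaluating at any `t` off the pole (one exists because
`(γ, δ) ≠ 0`) gives `k²(γβ+δ²)ⁿ = 1`. -/

lemma mobius_denom_mul (α β γ δ t : ℝ) (ht : γ * t + δ ≠ 0) :
    (γ * ((α * t + β) / (γ * t + δ)) + δ) * (γ * t + δ) = γ * (α + δ) * t + (γ * β + δ ^ 2) := by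
  field_simp
  ring

lemma exists_mul_add_ne_zero {α β γ δ : ℝ} (hm : α * δ - β * γ ≠ 0) :
    ∃ t : ℝ, γ * t + δ ≠ 0 := by
  rcases eq_or_ne δ 0 with hδ | hδ
  · refine ⟨1, ?_⟩
    rintro hγ
    apply hm
    obtain rfl : γ = 0 := by linarith
    simp [hδ]
  · exact ⟨0, by simpa using hδ⟩

lemma false_of_mul_pow_eq_one_of_ne {k c₀ : ℝ} {n : ℕ} (hn : n ≠ 0)
    (h : ∀ c ≠ c₀, k * c ^ n = 1) : False := by
  have h₁ := h (|c₀| + 1) (by linarith [le_abs_self c₀])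
  have h₂ := h (|c₀| + 2) (by linarith [le_abs_self c₀])
  have hk : k ≠ 0 := left_ne_zero_of_mul_eq_one h₁
  have hpow : (|c₀| + 1) ^ n = (|c₀| + 2) ^ n := mul_left_cancel₀ hk (h₁.trans h₂.symm)
  have := (pow_left_inj₀ (by positivity) (by positivity) hn).mp hpow
  linarith

lemma eq_zero_of_mul_affine_pow_eq_one_of_ne {a b k t₀ : ℝ} {n : ℕ} (hn : n ≠ 0)
    (h : ∀ t ≠ t₀, k * (a * t + b) ^ n = 1) : a = 0 := by
  by_contra ha
  refine false_of_mul_pow_eq_one_of_ne (k := k) (c₀ := a * t₀ + b) hn fun c hc => ?_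
  have hc' : (c - b) / a ≠ t₀ := by
    rintro rfl
    field_simp at hc
    exact hc (by ring)
  simpa [mul_div_cancel₀ _ ha] using h _ hc'

/-- Case (ii) in the derivation of Theorem 8 (fund3): the condition on the
`s`-coefficient `k(γt+δ)^n` arising from `φ∘φ = id` forces `γ(α+δ) = 0`
and `k²(γβ+δ²)^n = 1`. -/
theorem stmt_6 (α β γ δ k : ℝ) (hm : α * δ - β * γ ≠ 0)
    (n : ℕ) (hn : 1 ≤ n)
    (ψ : ℝ → ℝ) (hψ : ∀ t : ℝ, γ * t + δ ≠ 0 → ψ t = (α * t + β) / (γ * t + δ))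
    (h : ∀ t : ℝ, γ * t + δ ≠ 0 →
      (k * (γ * ψ t + δ) ^ n) * (k * (γ * t + δ) ^ n) = 1) :
    γ * (α + δ) = 0 ∧ k ^ 2 * (γ * β + δ ^ 2) ^ n = 1 := by
  have hkey : ∀ t, γ * t + δ ≠ 0 → k ^ 2 * (γ * (α + δ) * t + (γ * β + δ ^ 2)) ^ n = 1 := by
    intro t ht
    rw [← h t ht, hψ t ht, ← mobius_denom_mul α β γ δ t ht, mul_pow]
    ring
  have hslope : γ * (α + δ) = 0 := by
    rcases eq_or_ne γ 0 with hγ | hγ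
    · simp [hγ]
    refine eq_zero_of_mul_affine_pow_eq_one_of_ne (t₀ := -δ / γ) (by omega) fun t ht => hkey t ?_
    contrapose! ht
    field_simp
    linarith
  obtain ⟨t, ht⟩ := exists_mul_add_ne_zero hm
  exact ⟨hslope, by simpa [hslope] using hkey t ht⟩
end

section
/- Let q₁,q₂,q₃ ∈ ℝ[t] be nonzero polynomials of degrees m₁,m₂,m₃ such that every common divisor of q₁,q₂,q₃ is a unit. Let α,β,γ,δ ∈ ℝ with αδ−βγ ≠ 0, and for each i define Nᵢ(t) = Σ_{k=0}^{mᵢ} (coefficient of t^k in qᵢ)·(αt+β)^k·(γt+δ)^{mᵢ−k} ∈ ℝ[t]. Then every common divisor of N₁,N₂,N₃ is a unit. -/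
/-!
Over `ℂ`, a non-unit common divisor of the `Nᵢ` has a root `z`, which is then a common root of
the `Nᵢ`. If `γz + δ ≠ 0`, then `Nᵢ(z) = (γz + δ)^{mᵢ} qᵢ(ψ z)`, so `ψ z` is a common root of the
`qᵢ` and the minimal polynomial of `ψ z` over `ℝ` is a non-unit common divisor of the `qᵢ`.
If `γz + δ = 0`, only the top term of `N₁` survives: `N₁(z) = lc(q₁) (αz + β)^{m₁}`, and
`αz + β ≠ 0` because `αδ - βγ ≠ 0`.
-/

open Polynomial Finset

namespace Polynomial

variable {R : Type*} [CommRing R]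

/-- The numerator of `p((a X + b) / (c X + d))`, with the denominator cleared to the power
`p.natDegree`. -/
noncomputable def moebiusNumerator (a b c d : R) (p : R[X]) : R[X] :=
  ∑ k ∈ range (p.natDegree + 1),
    C (p.coeff k) * (C a * X + C b) ^ k * (C c * X + C d) ^ (p.natDegree - k)

theorem aeval_moebiusNumerator {A : Type*} [CommRing A] [Algebra R A] (a b c d : R) (p : R[X])
    (z : A) :
    aeval z (moebiusNumerator a b c d p) = ∑ k ∈ range (p.natDegree + 1),
      algebraMap R A (p.coeff k) * (algebraMap R A a * z + algebraMap R A b) ^ k *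
        (algebraMap R A c * z + algebraMap R A d) ^ (p.natDegree - k) := by
  simp [moebiusNumerator, map_sum]

theorem aeval_moebiusNumerator_of_ne_zero {L : Type*} [Field L] [Algebra R L] (a b c d : R)
    (p : R[X]) {z : L} (hz : algebraMap R L c * z + algebraMap R L d ≠ 0) :
    aeval z (moebiusNumerator a b c d p) =
      (algebraMap R L c * z + algebraMap R L d) ^ p.natDegree *
        aeval ((algebraMap R L a * z + algebraMap R L b) /
          (algebraMap R L c * z + algebraMap R L d)) p := by
  rw [aeval_moebiusNumerator, aeval_eq_sum_range, mul_sum]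
  refine sum_congr rfl fun k hk => ?_
  obtain ⟨j, hj⟩ := Nat.exists_eq_add_of_le (Nat.lt_succ_iff.mp (mem_range.mp hk))
  generalize algebraMap R L c * z + algebraMap R L d = u at hz ⊢
  rw [hj, Nat.add_sub_cancel_left, Algebra.smul_def, div_pow, pow_add]
  field_simp

theorem aeval_moebiusNumerator_of_eq_zero {A : Type*} [CommRing A] [Algebra R A] (a b c d : R)
    (p : R[X]) {z : A} (hz : algebraMap R A c * z + algebraMap R A d = 0) :
    aeval z (moebiusNumerator a b c d p) =
      algebraMap R A p.leadingCoeff * (algebraMap R A a * z + algebraMap R A b) ^ p.natDegree := by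
  rw [aeval_moebiusNumerator, sum_range_succ, sum_eq_zero, zero_add, Nat.sub_self, pow_zero,
    mul_one, leadingCoeff]
  intro k hk
  rw [hz, zero_pow (Nat.sub_ne_zero_of_lt (mem_range.mp hk)), mul_zero]

theorem aeval_moebiusNumerator_ne_zero_of_eq_zero {K L : Type*} [Field K] [CommRing L]
    [IsDomain L] [Algebra K L] {a b c d : K} (hdet : a * d - b * c ≠ 0) {p : K[X]} (hp : p ≠ 0)
    {z : L} (hz : algebraMap K L c * z + algebraMap K L d = 0) :
    aeval z (moebiusNumerator a b c d p) ≠ 0 := by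
  rw [aeval_moebiusNumerator_of_eq_zero _ _ _ _ _ hz]
  refine mul_ne_zero (by simpa using hp) (pow_ne_zero _ fun hab => hdet ?_)
  apply (algebraMap K L).injective
  simp only [map_sub, map_mul, map_zero]
  linear_combination algebraMap K L a * hz - algebraMap K L c * hab

theorem not_forall_aeval_eq_zero_of_forall_dvd_isUnit {K A ι : Type*} [Field K] [Ring A]
    [Nontrivial A] [Algebra K A] {p : ι → K[X]} (hp : ∀ d : K[X], (∀ i, d ∣ p i) → IsUnit d)
    (x : A) : ¬∀ i, aeval x (p i) = 0 :=
  fun h => minpoly.not_isUnit K x (hp _ fun i => minpoly.dvd K x (h i))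

end Polynomial

/-- Claim in the proof of Lemma 5 (Bt): if `gcd(q₁,q₂,q₃) = 1`, then the numerators
`Nᵢ` of `qᵢ(ψ(t))` obtained by clearing denominators satisfy `gcd(N₁,N₂,N₃) = 1`. -/
theorem stmt_11 (q : Fin 3 → ℝ[X]) (hq : ∀ i, q i ≠ 0)
    (hgcd : ∀ d : ℝ[X], (∀ i, d ∣ q i) → IsUnit d)
    (α β γ δ : ℝ) (hmob : α * δ - β * γ ≠ 0)
    (N : Fin 3 → ℝ[X])
    (hN : ∀ i, N i = ∑ k ∈ range ((q i).natDegree + 1),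
      C ((q i).coeff k) * (C α * X + C β) ^ k * (C γ * X + C δ) ^ ((q i).natDegree - k)) :
    ∀ d : ℝ[X], (∀ i, d ∣ N i) → IsUnit d := by
  intro d hd
  by_contra hdu
  have hN' : ∀ i, N i = moebiusNumerator α β γ δ (q i) := hN
  obtain ⟨z, hz⟩ := IsAlgClosed.exists_aeval_eq_zero ℂ d (mt isUnit_iff_degree_eq_zero.mpr hdu)
  have hNz : ∀ i, aeval z (moebiusNumerator α β γ δ (q i)) = 0 := fun i => by
    obtain ⟨e, he⟩ := hd i
    rw [← hN' i, he, map_mul, hz, zero_mul]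
  by_cases hpole : algebraMap ℝ ℂ γ * z + algebraMap ℝ ℂ δ = 0
  · exact aeval_moebiusNumerator_ne_zero_of_eq_zero hmob (hq 0) hpole (hNz 0)
  · refine not_forall_aeval_eq_zero_of_forall_dvd_isUnit hgcd
      ((algebraMap ℝ ℂ α * z + algebraMap ℝ ℂ β) / (algebraMap ℝ ℂ γ * z + algebraMap ℝ ℂ δ))
      fun i => ?_
    have h := (aeval_moebiusNumerator_of_ne_zero α β γ δ (q i) hpole).symm.trans (hNz i)
    exact (mul_eq_zero.mp h).resolve_left (pow_ne_zero _ hpole)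
end
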